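/- arXiv:2506.11704 — 3 statements merged into one kernel-verified Lean document; each statement's English description precedes it below -/
import Mathlib

section
/- Let T1 and T2 be finite trees, and let U be an isometric-universal graph for the family {T1, T2} that is both minimum (no isometric-universal graph for {T1, T2} has fewer vertices) and minimal (no proper subgraph of U is isometric-universal for {T1, T2}). Then U is a tree. -/
open SimpleGraph

/-- `φ` realizes `G` as an isometric subgraph of `U`: it maps edges to edges and
preserves all distances, where `edist` takes the value `⊤` between vertices in
different connected components. -/
def IsIsometricEmbedding {V W : Type} (G : SimpleGraph V) (U : SimpleGraph W)
    (φ : V → W) : Prop :=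
  (∀ u v : V, G.Adj u v → U.Adj (φ u) (φ v)) ∧
  ∀ u v : V, G.edist u v = U.edist (φ u) (φ v)

/-- `U` is an isometric-universal graph for the pair `{G₁, G₂}`: both `G₁` and `G₂`
are isomorphic to isometric subgraphs of `U`. -/
def IsIsoUniversalPair {V₁ V₂ W : Type} (G₁ : SimpleGraph V₁) (G₂ : SimpleGraph V₂)
    (U : SimpleGraph W) : Prop :=
  (∃ φ : V₁ → W, IsIsometricEmbedding G₁ U φ) ∧
  (∃ φ : V₂ → W, IsIsometricEmbedding G₂ U φ)

/-!
Let `A` and `B` be the images of `T₁` and `T₂` in `U`. By minimality, `U` is the union of the two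
images: every vertex lies in `A ∪ B` and every edge inside `A` or inside `B`. Gluing `T₁` and `T₂`
at one vertex gives a universal graph on `|T₁| + |T₂| - 1` vertices, so `A ∩ B` is nonempty.

The induced graph on `A ∩ B` is connected. Otherwise, take `u, v ∈ A ∩ B` not joined inside
`A ∩ B`, at minimal distance in `U`. Let `p` and `q` be the first steps from `u` towards `v` in
`T₁` and in `T₂`. Then `p ∈ A \ B` and `q ∈ B \ A`, and every vertex of `A ∩ B` is as far from `p`
as from `q`. So `A` is at least as close to `p` as to `q`, and `B` is at least as close to `q` as
to `p`. Identifying `q` with `p` then keeps both embeddings isometric and removes a vertex,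
contradicting the minimum property.

Hence `U` is two trees glued along a subtree, and counting edges shows it is a tree.
-/

namespace SimpleGraph

variable {V W : Type*} {G : SimpleGraph V} {H : SimpleGraph W}

lemma Adj.edist_le_edist_add_one {u v : V} (h : G.Adj u v) (w : V) :
    G.edist u w ≤ G.edist v w + 1 :=
  calc G.edist u w ≤ G.edist u v + G.edist v w := G.edist_triangle
    _ = G.edist v w + 1 := by rw [edist_eq_one_iff_adj.2 h, add_comm]

lemma le_edist_add_of_forall_adj {f : V → ℕ∞} (hf : ∀ x y, G.Adj x y → f x ≤ f y + 1)
    (x y : V) : f x ≤ G.edist x y + f y := by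
  have hwalk : ∀ {x z} (p : G.Walk x z), f x ≤ p.length + f z := by
    intro x z p
    induction p with
    | nil => simp
    | cons h p ih =>
      calc _ ≤ _ := hf _ _ h
        _ ≤ p.length + _ + 1 := by gcongr
        _ = _ := by rw [Walk.length_cons]; push_cast; ring
  by_cases hr : G.Reachable x y
  · obtain ⟨p, hp⟩ := hr.exists_walk_length_eq_edist
    exact hp ▸ hwalk p
  · simp [edist_eq_top_of_not_reachable hr]

lemma edist_le_of_forall_adj {f : V → W} (hf : ∀ x y, G.Adj x y → f x = f y ∨ H.Adj (f x) (f y))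
    (x y : V) : H.edist (f x) (f y) ≤ G.edist x y := by
  have := le_edist_add_of_forall_adj (f := fun z => H.edist (f z) (f y)) (G := G) ?_ x y
  · simpa using this
  intro a b h
  rcases hf a b h with he | hadj
  · simp [he]
  · exact hadj.edist_le_edist_add_one _

lemma Hom.edist_le (f : G →g H) (x y : V) : H.edist (f x) (f y) ≤ G.edist x y :=
  edist_le_of_forall_adj (fun _ _ h => .inr (f.map_adj h)) x y

lemma Reachable.exists_adj_dist_add_one {u v : V} (h : G.Reachable u v) (hne : u ≠ v) :
    ∃ t, G.Adj u t ∧ G.dist t v + 1 = G.dist u v := by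
  obtain ⟨p, hp⟩ := h.exists_walk_length_eq_dist
  have hnil : ¬ p.Nil := fun hn => hne hn.eq
  have hadj := p.adj_snd hnil
  refine ⟨p.snd, hadj, le_antisymm ?_ ?_⟩
  · have := dist_le p.tail
    have := p.length_tail_add_one hnil
    omega
  · have := hadj.reachable.dist_triangle_left v
    rw [dist_eq_one_iff_adj.2 hadj] at this
    omega

lemma IsTree.length_eq_dist {u v : V} (hT : G.IsTree) {p : G.Walk u v} (hp : p.IsPath) :
    p.length = G.dist u v := by
  obtain ⟨q, hq, hlen⟩ := (hT.connected u v).exists_path_of_dist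
  rw [← hlen, hT.existsUnique_path u v |>.unique hp hq]

lemma IsTree.dist_eq_add_of_adj {u t v w : V} (hT : G.IsTree) (hut : G.Adj u t)
    (htv : G.dist t v + 1 = G.dist u v) (hwt : G.dist w t = G.dist w u + 1) :
    G.dist w v = G.dist w u + G.dist u v := by
  obtain ⟨P, hP, hPlen⟩ := (hT.connected w u).exists_path_of_dist
  obtain ⟨Q, hQ, hQlen⟩ := (hT.connected t v).exists_path_of_dist
  have hPt : (P.concat hut).IsPath :=
    (P.concat hut).isPath_of_length_eq_dist (by rw [Walk.length_concat, hPlen, hwt])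
  have hQu : (Walk.cons hut Q).IsPath :=
    (Walk.cons hut Q).isPath_of_length_eq_dist (by rw [Walk.length_cons, hQlen, htv])
  have hPQ : (P.append (Walk.cons hut Q)).IsPath := by
    rw [hT.isAcyclic.isPath_iff_isChain] at hPt hQu ⊢
    rw [Walk.edges_concat, List.concat_eq_append] at hPt
    rw [Walk.edges_cons] at hQu
    rw [Walk.edges_append, Walk.edges_cons]
    have := hPt.append_overlap hQu (List.cons_ne_nil _ _)
    rwa [List.append_assoc, List.singleton_append] at this
  rw [← hT.length_eq_dist hPQ, Walk.length_append, Walk.length_cons, hPlen, hQlen, ← htv]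

lemma IsTree.dist_eq_ite {u t v : V} (hT : G.IsTree) (hut : G.Adj u t)
    (htv : G.dist t v + 1 = G.dist u v) (w : V) :
    G.dist w t = if G.dist w v = G.dist w u + G.dist u v then G.dist w u + 1
      else G.dist w u - 1 := by
  rcases hT.dist_eq_dist_add_one_of_adj w hut with hwu | hwt
  · have : G.dist w v ≤ G.dist w t + G.dist t v := hT.connected.dist_triangle
    rw [if_neg (by omega)]
    omega
  · rw [if_pos (hT.dist_eq_add_of_adj hut htv hwt), hwt]

lemma edist_le_edist_of_forall_mem_inter {A B : Set V} {p q : V}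
    (hcover : G.edgeSet ⊆ A.sym2 ∪ B.sym2) (hq : q ∉ A)
    (heq : ∀ w ∈ A ∩ B, G.edist w p = G.edist w q) {a : V} (ha : a ∈ A) :
    G.edist a p ≤ G.edist a q := by
  classical
  -- `F` is `d(·, p)` on `A` and `d(·, q)` off `A`; an edge leaving `A` starts in `A ∩ B`, where the
  -- two agree, so `F` is 1-Lipschitz and `F q = 0`.
  let F : V → ℕ∞ := fun x => if x ∈ A then G.edist x p else G.edist x q
  have hF : ∀ x y, G.Adj x y → F x ≤ F y + 1 := by
    intro x y hxy
    have hxy' : (x ∈ A ∧ y ∈ A) ∨ (x ∈ B ∧ y ∈ B) := hcover (G.mem_edgeSet.2 hxy)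
    by_cases hx : x ∈ A <;> by_cases hy : y ∈ A <;> simp only [F, hx, hy, if_true, if_false]
    · exact hxy.edist_le_edist_add_one p
    · rw [heq x ⟨hx, by tauto⟩]; exact hxy.edist_le_edist_add_one q
    · rw [heq y ⟨hy, by tauto⟩]; exact hxy.edist_le_edist_add_one q
    · exact hxy.edist_le_edist_add_one q
  simpa [F, ha, hq] using le_edist_add_of_forall_adj hF a q

section merge

variable [DecidableEq V] {p q : V}

def mergeMap (hpq : p ≠ q) (w : V) : {w : V // w ≠ q} :=
  if h : w = q then ⟨p, hpq⟩ else ⟨w, h⟩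

lemma mergeMap_val (hpq : p ≠ q) (w : V) :
    (mergeMap hpq w : V) = if w = q then p else w := by
  unfold mergeMap; split_ifs <;> rfl

lemma Adj.map_mergeMap (hpq : p ≠ q) (hnadj : ¬ G.Adj p q) {x y : V} (h : G.Adj x y) :
    (G.map (mergeMap hpq)).Adj (mergeMap hpq x) (mergeMap hpq y) := by
  refine map_adj_apply' h fun he => ?_
  have := congrArg Subtype.val he
  simp only [mergeMap_val] at this
  split_ifs at this <;> subst_vars
  · exact h.ne rfl
  · exact hnadj h.symm
  · exact hnadj h
  · exact h.ne rfl

lemma min_edist_le_edist_map_mergeMap (hpq : p ≠ q) (x y : V) :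
    min (G.edist x y) (min (G.edist x p) (G.edist x q) + min (G.edist y p) (G.edist y q)) ≤
      (G.map (mergeMap hpq)).edist (mergeMap hpq x) (mergeMap hpq y) := by
  set m : V → ℕ∞ := fun z => min (G.edist z p) (G.edist z q)
  set D : V → ℕ∞ := fun z => min (G.edist z y) (m z + m y)
  have hD_adj : ∀ z z', G.Adj z z' → D z ≤ D z' + 1 := by
    intro z z' h
    have hm : m z ≤ m z' + 1 := by
      simp only [m, ← min_add_add_right]
      exact min_le_min (h.edist_le_edist_add_one p) (h.edist_le_edist_add_one q)
    simp only [D, ← min_add_add_right]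
    refine min_le_min (h.edist_le_edist_add_one y) ?_
    rw [add_right_comm]
    gcongr
  -- `D` is 1-Lipschitz on `G` and takes the value `m y` at both `p` and `q`, so it is also
  -- 1-Lipschitz on the merged graph.
  have hD_end : ∀ r, r = p ∨ r = q → D r = m y := by
    rintro r hr
    have hmr : m r = 0 := by rcases hr with rfl | rfl <;> simp [m, edist_self]
    have hmy : m y ≤ G.edist r y := by
      rw [edist_comm]; rcases hr with rfl | rfl
      · exact min_le_left _ _
      · exact min_le_right _ _
    simp only [D, hmr, zero_add]
    exact min_eq_right hmy
  have hD_merge : ∀ z, D (mergeMap hpq z) = D z := by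
    intro z
    rw [mergeMap_val]
    split_ifs with hz
    · rw [hD_end p (.inl rfl), hD_end z (.inr hz)]
    · rfl
  have hF : ∀ a b, (G.map (mergeMap hpq)).Adj a b → D a ≤ D b + 1 := by
    rintro _ _ ⟨-, z, z', h, rfl, rfl⟩
    rw [hD_merge, hD_merge]
    exact hD_adj z z' h
  have := le_edist_add_of_forall_adj hF (mergeMap hpq x) (mergeMap hpq y)
  rw [hD_merge, hD_merge] at this
  have hDy : D y = 0 := nonpos_iff_eq_zero.1 ((min_le_left _ _).trans_eq edist_self)
  rwa [hDy, add_zero] at this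

end merge

lemma ncard_edgeSet_induce (s : Set V) :
    (G.induce s).edgeSet.ncard = (G.edgeSet ∩ s.sym2).ncard := by
  rw [← Set.ncard_image_of_injective _ (Sym2.map.injective Subtype.val_injective)]
  congr 1
  ext e
  induction e using Sym2.ind with
  | _ x y =>
    constructor
    · rintro ⟨e', he', hmap⟩
      induction e' using Sym2.ind with
      | _ a b =>
        rw [Sym2.map_mk] at hmap
        rw [← hmap]
        exact ⟨he', a.2, b.2⟩
    · rintro ⟨hxy, hx, hy⟩
      exact ⟨s(⟨x, hx⟩, ⟨y, hy⟩), hxy, rfl⟩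

lemma isTree_of_isTree_induce [Finite V] {A B : Set V} (hcover : G.edgeSet ⊆ A.sym2 ∪ B.sym2)
    (hunion : A ∪ B = Set.univ) (hA : (G.induce A).IsTree) (hB : (G.induce B).IsTree)
    (hAB : (G.induce (A ∩ B)).IsTree) : G.IsTree := by
  have hcard : ∀ S : Set V, (G.induce S).IsTree → (G.edgeSet ∩ S.sym2).ncard + 1 = S.ncard :=
    fun S hS => by
      rw [← ncard_edgeSet_induce, ← Nat.card_coe_set_eq, ← Nat.card_coe_set_eq]
      exact (isTree_iff_connected_and_card.1 hS).2
  obtain ⟨k⟩ := hAB.connected.nonempty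
  have hreach : ∀ x, G.Reachable x k := by
    intro x
    rcases (hunion.symm ▸ Set.mem_univ x : x ∈ A ∪ B) with hx | hx
    · exact (hA.connected ⟨x, hx⟩ ⟨k, k.2.1⟩).map (Embedding.induce A).toHom
    · exact (hB.connected ⟨x, hx⟩ ⟨k, k.2.2⟩).map (Embedding.induce B).toHom
  have : Nonempty V := ⟨k⟩
  refine isTree_iff_connected_and_card.2 ⟨⟨fun x y => (hreach x).trans (hreach y).symm⟩, ?_⟩
  have hE : G.edgeSet = (G.edgeSet ∩ A.sym2) ∪ (G.edgeSet ∩ B.sym2) := by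
    rw [← Set.inter_union_distrib_left, Set.inter_eq_left.2 hcover]
  have hEAB : (G.edgeSet ∩ A.sym2) ∩ (G.edgeSet ∩ B.sym2) = G.edgeSet ∩ (A ∩ B).sym2 := by
    rw [Set.sym2_inter, ← Set.inter_inter_distrib_left]
  have hEcard := Set.ncard_union_add_ncard_inter (G.edgeSet ∩ A.sym2) (G.edgeSet ∩ B.sym2)
  have hVcard := Set.ncard_union_add_ncard_inter A B
  rw [← hE, hEAB] at hEcard
  rw [hunion, Set.ncard_univ] at hVcard
  have := hcard A hA
  have := hcard B hB
  have := hcard _ hAB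
  rw [Nat.card_coe_set_eq]
  omega

end SimpleGraph

lemma Nat.card_subtype_ne_add_one {α : Type*} [Finite α] (a : α) :
    Nat.card {b // b ≠ a} + 1 = Nat.card α := by
  classical
  rw [← Finite.card_option, Nat.card_congr (Equiv.optionSubtypeNe a)]

namespace IsIsometricEmbedding

variable {V W : Type} {G : SimpleGraph V} {U : SimpleGraph W} {φ : V → W}

lemma of_edist_eq (h : ∀ u v, G.edist u v = U.edist (φ u) (φ v)) :
    IsIsometricEmbedding G U φ :=
  ⟨fun u v huv => edist_eq_one_iff_adj.1 ((h u v).symm.trans (edist_eq_one_iff_adj.2 huv)), h⟩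

lemma adj_iff (hφ : IsIsometricEmbedding G U φ) {a b : V} : U.Adj (φ a) (φ b) ↔ G.Adj a b := by
  rw [← edist_eq_one_iff_adj, ← hφ.2, edist_eq_one_iff_adj]

lemma injective (hφ : IsIsometricEmbedding G U φ) : Function.Injective φ :=
  fun a b h => edist_eq_zero_iff.1 (by rw [hφ.2, h, edist_self])

lemma dist_eq (hφ : IsIsometricEmbedding G U φ) (a b : V) : U.dist (φ a) (φ b) = G.dist a b := by
  rw [SimpleGraph.dist, SimpleGraph.dist, hφ.2]

lemma isTree_induce_range (hφ : IsIsometricEmbedding G U φ) (hT : G.IsTree) :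
    (U.induce (Set.range φ)).IsTree :=
  (Iso.isTree_iff { Equiv.ofInjective φ hφ.injective with map_rel_iff' := hφ.adj_iff }).1 hT

lemma of_retraction (π : W → V) (hφ : ∀ a b, G.Adj a b → U.Adj (φ a) (φ b))
    (hπ : ∀ x y, U.Adj x y → π x = π y ∨ G.Adj (π x) (π y)) (hπφ : ∀ a, π (φ a) = a) :
    IsIsometricEmbedding G U φ :=
  of_edist_eq fun a b => le_antisymm
    (by simpa only [hπφ] using edist_le_of_forall_adj hπ (φ a) (φ b))
    (edist_le_of_forall_adj (fun x y h => .inr (hφ x y h)) a b)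

lemma subgraph (hφ : IsIsometricEmbedding G U φ) (H : U.Subgraph) (hv : ∀ a, φ a ∈ H.verts)
    (hadj : ∀ a b, G.Adj a b → H.Adj (φ a) (φ b)) :
    IsIsometricEmbedding G H.coe (fun a => ⟨φ a, hv a⟩) :=
  of_edist_eq fun a b => le_antisymm ((hφ.2 a b).trans_le (H.hom.edist_le _ _))
    (edist_le_of_forall_adj (f := fun a => (⟨φ a, hv a⟩ : H.verts))
      (fun x y h => .inr (hadj x y h)) a b)

lemma map_mergeMap [DecidableEq W] (hφ : IsIsometricEmbedding G U φ) {p q : W} (hpq : p ≠ q)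
    (hnadj : ¬ U.Adj p q) {r : W}
    (hr : ∀ a, U.edist (φ a) r ≤ min (U.edist (φ a) p) (U.edist (φ a) q)) :
    IsIsometricEmbedding G (U.map (mergeMap hpq)) (mergeMap hpq ∘ φ) := by
  refine of_edist_eq fun a b => le_antisymm ?_ ?_
  · refine le_trans ?_ (min_edist_le_edist_map_mergeMap hpq (φ a) (φ b))
    rw [hφ.2]
    refine le_min le_rfl (U.edist_triangle.trans (add_le_add (hr a) ?_))
    rw [edist_comm]
    exact hr b
  · rw [hφ.2]
    exact edist_le_of_forall_adj (fun x y h => .inr (h.map_mergeMap hpq hnadj)) _ _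

end IsIsometricEmbedding

section glue

variable {V₁ V₂ : Type} [DecidableEq V₂] (r₁ : V₁) (r₂ : V₂)

def glueMap (y : V₂) : V₁ ⊕ {y : V₂ // y ≠ r₂} :=
  if h : y = r₂ then .inl r₁ else .inr ⟨y, h⟩

def glue (T₁ : SimpleGraph V₁) (T₂ : SimpleGraph V₂) : SimpleGraph (V₁ ⊕ {y : V₂ // y ≠ r₂}) :=
  T₁.map Sum.inl ⊔ T₂.map (glueMap r₁ r₂)

lemma isIsoUniversalPair_glue (T₁ : SimpleGraph V₁) (T₂ : SimpleGraph V₂) :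
    IsIsoUniversalPair T₁ T₂ (glue r₁ r₂ T₁ T₂) := by
  have hπ₁ : ∀ y, Sum.elim id (fun _ => r₁) (glueMap r₁ r₂ y) = r₁ := by
    intro y; unfold glueMap; split_ifs <;> rfl
  have hπ₂ : ∀ y, Sum.elim (fun _ => r₂) Subtype.val (glueMap r₁ r₂ y) = y := by
    intro y; unfold glueMap; split_ifs with h
    · exact h.symm
    · rfl
  have hinj : Function.Injective (glueMap r₁ r₂) := Function.LeftInverse.injective hπ₂
  constructor
  · refine ⟨Sum.inl, .of_retraction (Sum.elim id fun _ => r₁)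
      (fun a b h => .inl (map_adj_apply' h (Sum.inl_injective.ne h.ne))) ?_ fun _ => rfl⟩
    rintro _ _ (⟨-, a, b, h, rfl, rfl⟩ | ⟨-, a, b, h, rfl, rfl⟩)
    · exact .inr h
    · exact .inl (by rw [hπ₁, hπ₁])
  · refine ⟨glueMap r₁ r₂, .of_retraction (Sum.elim (fun _ => r₂) Subtype.val)
      (fun a b h => .inr (map_adj_apply' h (hinj.ne h.ne))) ?_ hπ₂⟩
    rintro _ _ (⟨-, a, b, h, rfl, rfl⟩ | ⟨-, a, b, h, rfl, rfl⟩)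
    · exact .inl rfl
    · exact .inr (by rwa [hπ₂, hπ₂])

end glue

section universal

variable {V₁ V₂ W : Type} {T₁ : SimpleGraph V₁} {T₂ : SimpleGraph V₂} {U : SimpleGraph W}
  {φ₁ : V₁ → W} {φ₂ : V₂ → W}

lemma range_union_eq_univ_and_edgeSet_subset (hφ₁ : IsIsometricEmbedding T₁ U φ₁)
    (hφ₂ : IsIsometricEmbedding T₂ U φ₂)
    (hminimal : ∀ H : U.Subgraph, H ≠ ⊤ → ¬ IsIsoUniversalPair T₁ T₂ H.coe) :
    Set.range φ₁ ∪ Set.range φ₂ = Set.univ ∧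
      U.edgeSet ⊆ (Set.range φ₁).sym2 ∪ (Set.range φ₂).sym2 := by
  set H : U.Subgraph :=
    (⊤ : U.Subgraph).induce (Set.range φ₁) ⊔ (⊤ : U.Subgraph).induce (Set.range φ₂)
  have hH : H = ⊤ := by
    by_contra hne
    refine hminimal H hne ⟨⟨_, hφ₁.subgraph H (fun a => .inl ⟨a, rfl⟩) ?_⟩,
      ⟨_, hφ₂.subgraph H (fun a => .inr ⟨a, rfl⟩) ?_⟩⟩
    · exact fun a b h => .inl ⟨⟨a, rfl⟩, ⟨b, rfl⟩, hφ₁.1 a b h⟩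
    · exact fun a b h => .inr ⟨⟨a, rfl⟩, ⟨b, rfl⟩, hφ₂.1 a b h⟩
  refine ⟨by simpa [H] using congrArg Subgraph.verts hH, fun e he => ?_⟩
  induction e using Sym2.ind with
  | _ x y =>
    have hxy : H.Adj x y := hH ▸ he
    rcases hxy with ⟨hx, hy, -⟩ | ⟨hx, hy, -⟩
    exacts [.inl ⟨hx, hy⟩, .inr ⟨hx, hy⟩]

lemma exists_isIsoUniversalPair_of_forall_edist_eq (hφ₁ : IsIsometricEmbedding T₁ U φ₁)
    (hφ₂ : IsIsometricEmbedding T₂ U φ₂)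
    (hcover : U.edgeSet ⊆ (Set.range φ₁).sym2 ∪ (Set.range φ₂).sym2) {p q : W}
    (hp : p ∈ Set.range φ₁ \ Set.range φ₂) (hq : q ∈ Set.range φ₂ \ Set.range φ₁)
    (heq : ∀ w ∈ Set.range φ₁ ∩ Set.range φ₂, U.edist w p = U.edist w q) :
    ∃ G : SimpleGraph {w // w ≠ q}, IsIsoUniversalPair T₁ T₂ G := by
  classical
  have hpq : p ≠ q := fun h => hq.2 (h ▸ hp.1)
  have hnadj : ¬ U.Adj p q := fun h => by
    rcases hcover (U.mem_edgeSet.2 h) with ⟨-, hqA⟩ | ⟨hpB, -⟩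
    exacts [hq.2 hqA, hp.2 hpB]
  refine ⟨U.map (mergeMap hpq),
    ⟨_, hφ₁.map_mergeMap hpq hnadj (r := p) fun a => le_min le_rfl ?_⟩,
    ⟨_, hφ₂.map_mergeMap hpq hnadj (r := q) fun a => le_min ?_ le_rfl⟩⟩
  · exact edist_le_edist_of_forall_mem_inter hcover hq.2 heq ⟨a, rfl⟩
  · exact edist_le_edist_of_forall_mem_inter (Set.union_comm _ _ ▸ hcover) hp.2
      (fun w hw => (heq w ⟨hw.2, hw.1⟩).symm) ⟨a, rfl⟩

lemma exists_adj_mem_inter_dist_lt (hT₁ : T₁.IsTree) (hT₂ : T₂.IsTree)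
    (hφ₁ : IsIsometricEmbedding T₁ U φ₁) (hφ₂ : IsIsometricEmbedding T₂ U φ₂)
    (hcover : U.edgeSet ⊆ (Set.range φ₁).sym2 ∪ (Set.range φ₂).sym2)
    (hsmall : ∀ q : W, ∀ G : SimpleGraph {w // w ≠ q}, ¬ IsIsoUniversalPair T₁ T₂ G)
    {u v : W} (hu : u ∈ Set.range φ₁ ∩ Set.range φ₂) (hv : v ∈ Set.range φ₁ ∩ Set.range φ₂)
    (huv : u ≠ v) :
    ∃ m ∈ Set.range φ₁ ∩ Set.range φ₂, U.Adj u m ∧ U.dist m v < U.dist u v := by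
  obtain ⟨⟨u₁, rfl⟩, u₂, hu₂⟩ := hu
  obtain ⟨⟨v₁, rfl⟩, v₂, hv₂⟩ := hv
  have transfer : ∀ {a b c d}, φ₂ c = φ₁ a → φ₂ d = φ₁ b → T₁.dist a b = T₂.dist c d := by
    intro a b c d hca hdb
    rw [← hφ₁.dist_eq, ← hφ₂.dist_eq, hca, hdb]
  obtain ⟨t₁, hut₁, htv₁⟩ :=
    (hT₁.connected u₁ v₁).exists_adj_dist_add_one fun h => huv (h ▸ rfl)
  obtain ⟨t₂, hut₂, htv₂⟩ :=
    (hT₂.connected u₂ v₂).exists_adj_dist_add_one fun h => huv (by rw [← hu₂, ← hv₂, h])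
  by_contra! hfar
  have hp : φ₁ t₁ ∉ Set.range φ₂ := fun hB => by
    have := hfar _ ⟨⟨t₁, rfl⟩, hB⟩ (hφ₁.adj_iff.2 hut₁)
    rw [hφ₁.dist_eq, hφ₁.dist_eq] at this
    omega
  have hq : φ₂ t₂ ∉ Set.range φ₁ := fun hA => by
    have := hfar _ ⟨hA, ⟨t₂, rfl⟩⟩ (hu₂ ▸ hφ₂.adj_iff.2 hut₂)
    rw [← hu₂, ← hv₂, hφ₂.dist_eq, hφ₂.dist_eq] at this
    omega
  -- In a tree, the distance from `w` to the first step from `u` towards `v` is determined by the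
  -- distances among `w`, `u`, `v`; for `w` in both images these are the same in `T₁` and `T₂`.
  have heq : ∀ w ∈ Set.range φ₁ ∩ Set.range φ₂, U.edist w (φ₁ t₁) = U.edist w (φ₂ t₂) := by
    rintro _ ⟨⟨w₁, rfl⟩, w₂, hw₂⟩
    rw [← hφ₁.2, ← hw₂, ← hφ₂.2, ← (hT₁.connected _ _).coe_dist_eq_edist,
      ← (hT₂.connected _ _).coe_dist_eq_edist, hT₁.dist_eq_ite hut₁ htv₁,
      hT₂.dist_eq_ite hut₂ htv₂, transfer hw₂ hv₂, transfer hw₂ hu₂, transfer hu₂ hv₂]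
  obtain ⟨G, hG⟩ := exists_isIsoUniversalPair_of_forall_edist_eq hφ₁ hφ₂ hcover
    ⟨⟨t₁, rfl⟩, hp⟩ ⟨⟨t₂, rfl⟩, hq⟩ heq
  exact hsmall _ G hG

lemma preconnected_induce_inter (hT₁ : T₁.IsTree) (hT₂ : T₂.IsTree)
    (hφ₁ : IsIsometricEmbedding T₁ U φ₁) (hφ₂ : IsIsometricEmbedding T₂ U φ₂)
    (hcover : U.edgeSet ⊆ (Set.range φ₁).sym2 ∪ (Set.range φ₂).sym2)
    (hsmall : ∀ q : W, ∀ G : SimpleGraph {w // w ≠ q}, ¬ IsIsoUniversalPair T₁ T₂ G) :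
    (U.induce (Set.range φ₁ ∩ Set.range φ₂)).Preconnected := by
  suffices h : ∀ n, ∀ u v : ↥(Set.range φ₁ ∩ Set.range φ₂), U.dist u v = n →
      (U.induce (Set.range φ₁ ∩ Set.range φ₂)).Reachable u v from
    fun u v => h _ u v rfl
  intro n
  induction n using Nat.strong_induction_on with
  | _ n ih =>
    rintro u v rfl
    by_cases huv : u = v
    · exact huv ▸ .rfl
    obtain ⟨m, hm, hum, hmv⟩ := exists_adj_mem_inter_dist_lt hT₁ hT₂ hφ₁ hφ₂ hcover hsmall
      u.2 v.2 (Subtype.coe_ne_coe.2 huv)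
    exact (Adj.reachable (show (U.induce _).Adj u ⟨m, hm⟩ from hum)).trans
      (ih _ hmv ⟨m, hm⟩ v rfl)

end universal

/-- If `U` is a minimum and minimal isometric-universal graph for a
pair of finite trees `{T₁, T₂}`, then `U` is a tree. -/
theorem stmt_0 {V₁ V₂ W : Type} [Fintype V₁] [Fintype V₂] [Fintype W]
    (T₁ : SimpleGraph V₁) (T₂ : SimpleGraph V₂) (U : SimpleGraph W)
    (hT₁ : T₁.IsTree) (hT₂ : T₂.IsTree)
    (hU : IsIsoUniversalPair T₁ T₂ U)
    (hmin : ∀ (W' : Type) (_ : Finite W') (U' : SimpleGraph W'),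
      IsIsoUniversalPair T₁ T₂ U' → Nat.card W ≤ Nat.card W')
    (hminimal : ∀ H : U.Subgraph, H ≠ ⊤ → ¬ IsIsoUniversalPair T₁ T₂ H.coe) :
    U.IsTree := by
  classical
  obtain ⟨⟨φ₁, hφ₁⟩, ⟨φ₂, hφ₂⟩⟩ := hU
  obtain ⟨hunion, hcover⟩ := range_union_eq_univ_and_edgeSet_subset hφ₁ hφ₂ hminimal
  have hsmall : ∀ q : W, ∀ G : SimpleGraph {w // w ≠ q}, ¬ IsIsoUniversalPair T₁ T₂ G :=
    fun q G hG => by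
      have := hmin _ inferInstance G hG
      have := Nat.card_subtype_ne_add_one q
      omega
  have hcard : Nat.card W + 1 ≤ Nat.card V₁ + Nat.card V₂ := by
    obtain ⟨r₁⟩ := hT₁.connected.nonempty
    obtain ⟨r₂⟩ := hT₂.connected.nonempty
    have hglue := hmin _ inferInstance _ (isIsoUniversalPair_glue r₁ r₂ T₁ T₂)
    rw [Nat.card_sum] at hglue
    have := Nat.card_subtype_ne_add_one r₂
    omega
  have hne : (Set.range φ₁ ∩ Set.range φ₂).Nonempty := by
    have := Set.ncard_union_add_ncard_inter (Set.range φ₁) (Set.range φ₂)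
    rw [hunion, Set.ncard_univ, Set.ncard_range_of_injective hφ₁.injective,
      Set.ncard_range_of_injective hφ₂.injective] at this
    exact Set.nonempty_of_ncard_ne_zero (by omega)
  have hA := hφ₁.isTree_induce_range hT₁
  have hK : (U.induce (Set.range φ₁ ∩ Set.range φ₂)).IsTree :=
    ⟨(connected_iff _).2 ⟨preconnected_induce_inter hT₁ hT₂ hφ₁ hφ₂ hcover hsmall, hne.to_subtype⟩,
      hA.isAcyclic.embedding (U.induceHomOfLE Set.inter_subset_left)⟩
  exact isTree_of_isTree_induce hcover hunion hA (hφ₂.isTree_induce_range hT₂) hK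
end

section
/- For any two finite trees T1 and T2 there exists a minimum isometric-universal graph for the family {T1, T2} that is itself a tree. -/
open SimpleGraph

/-!
Call `R ⊆ V₁ × V₂` distance-preserving if `dist (a, a') = dist (y, y')` for all `(a, y)`,
`(a', y') ∈ R`. The pairs of vertices that two isometric embeddings into a universal graph `U`
send to the same vertex form such a relation, so `|U| ≥ |V₁| + |V₂| - |R|` for a maximum `R`.
Conversely, take a maximum `R`. In a tree the distances from the vertex after `a` on a
geodesic from `a` to `b` are determined by the distances from `a` and from `b`, so `R` can be
extended one step along geodesics unless it already contains that step; hence the second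
coordinates of `R` span a subtree of `T₂`. Gluing `T₂` onto `T₁` along `R` then gives a
connected graph on `|V₁| + |V₂| - |R|` vertices with at most one edge fewer, i.e. a tree, and
injective homomorphisms from a tree into a tree are isometric.
-/

namespace SimpleGraph

variable {V W : Type*} {G : SimpleGraph V}

lemma IsAcyclic.length_eq_dist_of_isPath (hG : G.IsAcyclic) {u v : V} {p : G.Walk u v}
    (hp : p.IsPath) : p.length = G.dist u v := by
  obtain ⟨q, hq, hql⟩ := p.reachable.exists_path_of_dist
  have := (hG.subsingleton_path u v).elim ⟨p, hp⟩ ⟨q, hq⟩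
  rw [← hql, Subtype.mk.inj this]

lemma IsTree.dist_map_of_injective {H : SimpleGraph W} (hG : G.IsTree) (hH : H.IsAcyclic)
    (f : G →g H) (hf : Function.Injective f) (u v : V) : H.dist (f u) (f v) = G.dist u v := by
  obtain ⟨p, hp, hpl⟩ := hG.connected.exists_path_of_dist u v
  rw [← hH.length_eq_dist_of_isPath (hp.map hf), Walk.length_map, hpl]

lemma Connected.exists_adj_dist_add_one (hG : G.Connected) {a b : V} (h : a ≠ b) :
    ∃ c, G.Adj a c ∧ G.dist c b + 1 = G.dist a b := by
  obtain ⟨p, hp⟩ := hG.exists_walk_length_eq_dist a b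
  cases p with
  | nil => exact absurd rfl h
  | @cons _ c _ hac q =>
    refine ⟨c, hac, le_antisymm ?_ ?_⟩
    · rw [← hp, Walk.length_cons]
      exact Nat.add_le_add_right (dist_le q) 1
    · calc G.dist a b ≤ G.dist a c + G.dist c b := hG.dist_triangle
        _ = G.dist c b + 1 := by rw [dist_eq_one_iff_adj.2 hac, add_comm]

lemma IsTree.eq_of_adj_of_dist_add_one (hG : G.IsTree) {v w₁ w₂ x : V}
    (h₁ : G.Adj v w₁) (h₂ : G.Adj v w₂)
    (hd₁ : G.dist w₁ x + 1 = G.dist v x) (hd₂ : G.dist w₂ x + 1 = G.dist v x) : w₁ = w₂ := by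
  obtain ⟨p₁, -, hp₁⟩ := hG.connected.exists_path_of_dist w₁ x
  obtain ⟨p₂, -, hp₂⟩ := hG.connected.exists_path_of_dist w₂ x
  have geodesic : ∀ {w} (h : G.Adj v w) (p : G.Walk w x), G.dist w x + 1 = G.dist v x →
      p.length = G.dist w x → (Walk.cons h p).IsPath := fun h p hd hp =>
    Walk.isPath_of_length_eq_dist _ (by rw [Walk.length_cons, hp, hd])
  have := (hG.isAcyclic.subsingleton_path v x).elim ⟨_, geodesic h₁ p₁ hd₁ hp₁⟩
    ⟨_, geodesic h₂ p₂ hd₂ hp₂⟩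
  simpa using congrArg (fun p : G.Path v x => p.1.snd) this

/-- The edge `ac` points away from `x` and towards `b`, so `c` lies on the geodesic from `x`
to `b`: walking on from `c` towards `b` keeps moving away from `x`, because a vertex of a tree
has only one neighbour closer to `x`. -/
lemma IsTree.dist_eq_dist_add_dist_of_adj (hG : G.IsTree) {a c b x : V}
    (hac : G.Adj a c) (hcx : G.dist c x = G.dist a x + 1) (hcb : G.dist c b + 1 = G.dist a b) :
    G.dist b x = G.dist c x + G.dist c b := by
  induction hn : G.dist c b generalizing a c with
  | zero =>
    rw [hG.connected.dist_eq_zero_iff.1 hn]; rfl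
  | succ n ih =>
    have hcb' : c ≠ b := fun h => by simp [h] at hn
    obtain ⟨d, hcd, hdb⟩ := hG.connected.exists_adj_dist_add_one hcb'
    have hdx : G.dist d x = G.dist c x + 1 := by
      rw [dist_comm, dist_comm (u := c)]
      refine (hG.dist_eq_dist_add_one_of_adj x hcd).resolve_left fun h => ?_
      have had : a = d := hG.eq_of_adj_of_dist_add_one hac.symm hcd
        (by rw [hcx]) (by rw [dist_comm, dist_comm (u := c), h])
      subst had
      omega
    have := ih hcd hdx hdb (by omega)
    omega

lemma IsTree.dist_eq_ite_of_adj (hG : G.IsTree) {a b c : V} (hac : G.Adj a c)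
    (hcb : G.dist c b + 1 = G.dist a b) (x : V) :
    G.dist c x = if G.dist b x = G.dist a x + G.dist a b then G.dist a x + 1
      else G.dist a x - 1 := by
  have htri : G.dist b x ≤ G.dist b c + G.dist c x := hG.connected.dist_triangle
  rw [dist_comm (u := b) (v := c)] at htri
  rcases hG.dist_eq_dist_add_one_of_adj x hac with hx | hx <;>
    rw [dist_comm (u := x), dist_comm (u := x)] at hx
  · rw [if_neg (by omega)]
    omega
  · rw [hG.dist_eq_dist_add_dist_of_adj hac hx hcb, if_pos (by omega)]
    omega

section DistPreserving

variable {V₁ V₂ : Type*} {G₁ : SimpleGraph V₁} {G₂ : SimpleGraph V₂} {R : Set (V₁ × V₂)}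

def IsDistPreserving (G₁ : SimpleGraph V₁) (G₂ : SimpleGraph V₂) (R : Set (V₁ × V₂)) : Prop :=
  ∀ p ∈ R, ∀ q ∈ R, G₁.dist p.1 q.1 = G₂.dist p.2 q.2

lemma IsDistPreserving.snd_eq_of_fst_eq (hR : IsDistPreserving G₁ G₂ R) (h₂ : G₂.Connected)
    {p q : V₁ × V₂} (hp : p ∈ R) (hq : q ∈ R) (h : p.1 = q.1) : p.2 = q.2 := by
  rw [← h₂.dist_eq_zero_iff, ← hR p hp q hq, h, dist_self]

lemma IsDistPreserving.fst_eq_of_snd_eq (hR : IsDistPreserving G₁ G₂ R) (h₁ : G₁.Connected)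
    {p q : V₁ × V₂} (hp : p ∈ R) (hq : q ∈ R) (h : p.2 = q.2) : p.1 = q.1 := by
  rw [← h₁.dist_eq_zero_iff, hR p hp q hq, h, dist_self]

lemma IsDistPreserving.insert_of_adj (h₁ : G₁.IsTree) (h₂ : G₂.IsTree)
    (hR : IsDistPreserving G₁ G₂ R) {a b c : V₁} {y z w : V₂} (ha : (a, y) ∈ R)
    (hb : (b, z) ∈ R) (hac : G₁.Adj a c) (hcb : G₁.dist c b + 1 = G₁.dist a b)
    (hyw : G₂.Adj y w) (hwz : G₂.dist w z + 1 = G₂.dist y z) :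
    IsDistPreserving G₁ G₂ (insert (c, w) R) := by
  have key : ∀ p ∈ R, G₁.dist c p.1 = G₂.dist w p.2 := fun p hp => by
    rw [h₁.dist_eq_ite_of_adj hac hcb, h₂.dist_eq_ite_of_adj hyw hwz, hR _ ha _ hp,
      hR _ hb _ hp, hR _ ha _ hb]
  rintro p (rfl | hp) q (rfl | hq)
  · simp
  · exact key q hq
  · rw [dist_comm, dist_comm (G := G₂)]
    exact key p hp
  · exact hR p hp q hq

lemma IsDistPreserving.reachable_induce_snd (h₁ : G₁.IsTree) (h₂ : G₂.IsTree)
    (hR : IsDistPreserving G₁ G₂ R)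
    (hmax : ∀ c w, IsDistPreserving G₁ G₂ (insert (c, w) R) → (c, w) ∈ R)
    {a b : V₁} {y z : V₂} (ha : (a, y) ∈ R) (hb : (b, z) ∈ R) :
    (G₂.induce (Prod.snd '' R)).Reachable ⟨y, _, ha, rfl⟩ ⟨z, _, hb, rfl⟩ := by
  induction hn : G₁.dist a b generalizing a y with
  | zero =>
    obtain rfl := h₁.connected.dist_eq_zero_iff.1 hn
    obtain rfl : y = z := hR.snd_eq_of_fst_eq h₂.connected ha hb rfl
    rfl
  | succ n ih =>
    have hab : a ≠ b := fun h => by simp [h] at hn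
    have hyz : y ≠ z := fun h => hab (hR.fst_eq_of_snd_eq h₁.connected ha hb h)
    obtain ⟨c, hac, hcb⟩ := h₁.connected.exists_adj_dist_add_one hab
    obtain ⟨w, hyw, hwz⟩ := h₂.connected.exists_adj_dist_add_one hyz
    have hcw : (c, w) ∈ R := hmax c w (hR.insert_of_adj h₁ h₂ ha hb hac hcb hyw hwz)
    have hstep : (G₂.induce (Prod.snd '' R)).Adj ⟨y, _, ha, rfl⟩ ⟨w, _, hcw, rfl⟩ := hyw
    exact hstep.reachable.trans (ih hcw (by omega))

lemma exists_isDistPreserving_ncard_max [Finite V₁] [Finite V₂]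
    (G₁ : SimpleGraph V₁) (G₂ : SimpleGraph V₂) :
    ∃ R, IsDistPreserving G₁ G₂ R ∧ ∀ R', IsDistPreserving G₁ G₂ R' → R'.ncard ≤ R.ncard :=
  Set.exists_max_image {R | IsDistPreserving G₁ G₂ R} Set.ncard (Set.toFinite _)
    ⟨∅, by simp [IsDistPreserving]⟩

lemma IsDistPreserving.connected_induce_snd_of_ncard_max [Finite V₁] [Finite V₂]
    (h₁ : G₁.IsTree) (h₂ : G₂.IsTree) (hR : IsDistPreserving G₁ G₂ R)
    (hmax : ∀ R', IsDistPreserving G₁ G₂ R' → R'.ncard ≤ R.ncard) :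
    (G₂.induce (Prod.snd '' R)).Connected := by
  have hmax' : ∀ c w, IsDistPreserving G₁ G₂ (insert (c, w) R) → (c, w) ∈ R := by
    intro c w hcw
    by_contra hnot
    have := hmax _ hcw
    rw [Set.ncard_insert_of_notMem hnot] at this
    omega
  obtain ⟨a₀⟩ := h₁.connected.nonempty
  obtain ⟨y₀⟩ := h₂.connected.nonempty
  obtain ⟨p, hp⟩ : R.Nonempty := by
    have := hmax {(a₀, y₀)} (by simp [IsDistPreserving])
    rw [Set.ncard_singleton] at this
    exact Set.nonempty_of_ncard_ne_zero (by omega)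
  refine (connected_iff _).2 ⟨?_, ⟨⟨p.2, p, hp, rfl⟩⟩⟩
  rintro ⟨_, ⟨a, y⟩, ha, rfl⟩ ⟨_, ⟨b, z⟩, hb, rfl⟩
  exact hR.reachable_induce_snd h₁ h₂ hmax' ha hb

section Partner

variable {ρ : V₂ → V₁} (hρ : ∀ v ∈ Prod.snd '' R, (ρ v, v) ∈ R)
include hρ

lemma IsDistPreserving.injOn_of_partner (hR : IsDistPreserving G₁ G₂ R) (h₂ : G₂.Connected) :
    Set.InjOn ρ (Prod.snd '' R) :=
  fun u hu v hv h => hR.snd_eq_of_fst_eq h₂ (hρ u hu) (hρ v hv) h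

lemma IsDistPreserving.adj_of_partner (hR : IsDistPreserving G₁ G₂ R) :
    ∀ u ∈ Prod.snd '' R, ∀ v ∈ Prod.snd '' R, G₂.Adj u v → G₁.Adj (ρ u) (ρ v) := by
  intro u hu v hv huv
  rwa [← dist_eq_one_iff_adj, hR _ (hρ u hu) _ (hρ v hv), dist_eq_one_iff_adj]

end Partner

lemma IsDistPreserving.ncard_image_snd (hR : IsDistPreserving G₁ G₂ R) (h₁ : G₁.Connected) :
    (Prod.snd '' R).ncard = R.ncard :=
  Set.InjOn.ncard_image fun _ hp _ hq h => Prod.ext (hR.fst_eq_of_snd_eq h₁ hp hq h) h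

end DistPreserving

lemma edgeSet_map_of_injective {f : V → W} (hf : Function.Injective f) (G : SimpleGraph V) :
    (G.map f).edgeSet = Sym2.map f '' G.edgeSet :=
  edgeSet_map ⟨f, hf⟩ G

lemma ncard_edgeSet_map_of_injective {f : V → W} (hf : Function.Injective f)
    (G : SimpleGraph V) : (G.map f).edgeSet.ncard = G.edgeSet.ncard := by
  rw [edgeSet_map_of_injective hf, Set.ncard_image_of_injective _ (Sym2.map.injective hf)]

section Glue

variable {V₁ V₂ : Type*} (G₁ : SimpleGraph V₁) (G₂ : SimpleGraph V₂) (E : Set V₂) (ρ : V₂ → V₁)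

open Classical in
noncomputable def glueMap (v : V₂) : V₁ ⊕ ↥Eᶜ :=
  if h : v ∈ E then .inl (ρ v) else .inr ⟨v, h⟩

/-- `G₂` glued onto `G₁` by identifying each `v ∈ E` with `ρ v`. -/
noncomputable def glue : SimpleGraph (V₁ ⊕ ↥Eᶜ) :=
  G₁.map Sum.inl ⊔ G₂.map (glueMap E ρ)

variable {E ρ}

lemma glueMap_of_mem {v : V₂} (h : v ∈ E) : glueMap E ρ v = .inl (ρ v) := dif_pos h

lemma glueMap_of_notMem {v : V₂} (h : v ∉ E) : glueMap E ρ v = .inr ⟨v, h⟩ := dif_neg h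

lemma glueMap_injective (hρ : Set.InjOn ρ E) : Function.Injective (glueMap E ρ) := by
  intro u v huv
  by_cases hu : u ∈ E <;> by_cases hv : v ∈ E
  · rw [glueMap_of_mem hu, glueMap_of_mem hv, Sum.inl.injEq] at huv
    exact hρ hu hv huv
  · rw [glueMap_of_mem hu, glueMap_of_notMem hv] at huv
    cases huv
  · rw [glueMap_of_notMem hu, glueMap_of_mem hv] at huv
    cases huv
  · rw [glueMap_of_notMem hu, glueMap_of_notMem hv] at huv
    exact congrArg Subtype.val (Sum.inr_injective huv)

def glueHomLeft : G₁ →g glue G₁ G₂ E ρ :=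
  ⟨Sum.inl, fun h => Or.inl (map_adj_apply' h (Sum.inl_injective.ne h.ne))⟩

noncomputable def glueHomRight (hρ : Set.InjOn ρ E) : G₂ →g glue G₁ G₂ E ρ :=
  ⟨glueMap E ρ, fun h => Or.inr (map_adj_apply' h ((glueMap_injective hρ).ne h.ne))⟩

lemma glue_connected (h₁ : G₁.Connected) (h₂ : G₂.Connected) (hρ : Set.InjOn ρ E)
    (hE : E.Nonempty) : (glue G₁ G₂ E ρ).Connected := by
  obtain ⟨y, hy⟩ := hE
  have hreach : ∀ w, (glue G₁ G₂ E ρ).Reachable w (.inl (ρ y)) := by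
    rintro (a | w)
    · exact (h₁.preconnected a (ρ y)).map (glueHomLeft G₁ G₂)
    · have hw : glueHomRight G₁ G₂ hρ w = .inr w := glueMap_of_notMem w.2
      have hy' : glueHomRight G₁ G₂ hρ y = .inl (ρ y) := glueMap_of_mem hy
      simpa only [hw, hy'] using (h₂.preconnected w y).map (glueHomRight G₁ G₂ hρ)
  exact (connected_iff _).2 ⟨fun u v => (hreach u).trans (hreach v).symm, ⟨.inl (ρ y)⟩⟩

lemma card_sum_compl_add_ncard [Finite V₁] [Finite V₂] :
    Nat.card (V₁ ⊕ ↥Eᶜ) + E.ncard = Nat.card V₁ + Nat.card V₂ := by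
  rw [Nat.card_sum, Nat.card_coe_set_eq, ← Set.ncard_add_ncard_compl E]
  ring

lemma image_edgeSet_induce_subset_inter (hρ : Set.InjOn ρ E)
    (hadj : ∀ u ∈ E, ∀ v ∈ E, G₂.Adj u v → G₁.Adj (ρ u) (ρ v)) :
    Sym2.map (glueMap E ρ ∘ Subtype.val) '' (G₂.induce E).edgeSet ⊆
      (G₁.map Sum.inl).edgeSet ∩ (G₂.map (glueMap E ρ)).edgeSet := by
  rintro _ ⟨e, he, rfl⟩
  induction e using Sym2.ind with
  | _ u v =>
  have huv : G₂.Adj u v := he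
  rw [edgeSet_map_of_injective Sum.inl_injective,
    edgeSet_map_of_injective (glueMap_injective hρ)]
  refine ⟨⟨s(ρ u, ρ v), hadj u u.2 v v.2 huv, ?_⟩, ⟨s(u, v), huv, rfl⟩⟩
  simp [glueMap_of_mem u.2, glueMap_of_mem v.2]

lemma ncard_edgeSet_glue_add_one_le [Finite V₁] [Finite V₂] (h₁ : G₁.IsTree) (h₂ : G₂.IsTree)
    (hρ : Set.InjOn ρ E) (hadj : ∀ u ∈ E, ∀ v ∈ E, G₂.Adj u v → G₁.Adj (ρ u) (ρ v))
    (hE : (G₂.induce E).Connected) :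
    Nat.card (glue G₁ G₂ E ρ).edgeSet + 1 ≤ Nat.card (V₁ ⊕ ↥Eᶜ) := by
  have hunion := Set.ncard_union_add_ncard_inter (G₁.map Sum.inl).edgeSet
    (G₂.map (glueMap E ρ)).edgeSet
  have hinter : (G₂.induce E).edgeSet.ncard ≤
      ((G₁.map Sum.inl).edgeSet ∩ (G₂.map (glueMap E ρ)).edgeSet).ncard := by
    rw [← Set.ncard_image_of_injective _
      (Sym2.map.injective ((glueMap_injective hρ).comp Subtype.val_injective))]
    exact Set.ncard_le_ncard (image_edgeSet_induce_subset_inter G₁ G₂ hρ hadj)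
  have hE' := hE.card_vert_le_card_edgeSet_add_one
  have h₁' := ((isTree_iff_connected_and_card).1 h₁).2
  have h₂' := ((isTree_iff_connected_and_card).1 h₂).2
  have hcard := card_sum_compl_add_ncard (V₁ := V₁) (E := E)
  rw [ncard_edgeSet_map_of_injective Sum.inl_injective,
    ncard_edgeSet_map_of_injective (glueMap_injective hρ)] at hunion
  simp only [Nat.card_coe_set_eq] at *
  rw [glue, edgeSet_sup]
  omega

lemma glue_isTree [Finite V₁] [Finite V₂] (h₁ : G₁.IsTree) (h₂ : G₂.IsTree)
    (hρ : Set.InjOn ρ E) (hadj : ∀ u ∈ E, ∀ v ∈ E, G₂.Adj u v → G₁.Adj (ρ u) (ρ v))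
    (hE : (G₂.induce E).Connected) : (glue G₁ G₂ E ρ).IsTree := by
  have hconn := glue_connected G₁ G₂ h₁.connected h₂.connected hρ
    (Set.nonempty_coe_sort.1 hE.nonempty)
  refine isTree_iff_connected_and_card.2 ⟨hconn, le_antisymm ?_
    hconn.card_vert_le_card_edgeSet_add_one⟩
  exact ncard_edgeSet_glue_add_one_le G₁ G₂ h₁ h₂ hρ hadj hE

end Glue

lemma IsTree.isIsometricEmbedding {V W : Type} {G : SimpleGraph V} {U : SimpleGraph W}
    (hG : G.IsTree) (hU : U.IsAcyclic) (f : G →g U) (hf : Function.Injective f) :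
    IsIsometricEmbedding G U f := by
  refine ⟨fun _ _ h => f.map_adj h, fun u v => ?_⟩
  rw [← (hG.connected u v).coe_dist_eq_edist, ← ((hG.connected u v).map f).coe_dist_eq_edist,
    hG.dist_map_of_injective hU f hf]

end SimpleGraph

lemma IsIsometricEmbedding.injective_s1 {V W : Type} {G : SimpleGraph V} {U : SimpleGraph W}
    {φ : V → W} (h : IsIsometricEmbedding G U φ) : Function.Injective φ := fun u v huv => by
  rw [← edist_eq_zero_iff, h.2, huv, edist_self]

lemma isDistPreserving_of_isIsometricEmbedding {V₁ V₂ W : Type} {G₁ : SimpleGraph V₁}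
    {G₂ : SimpleGraph V₂} {U : SimpleGraph W} {φ₁ : V₁ → W} {φ₂ : V₂ → W}
    (h₁ : IsIsometricEmbedding G₁ U φ₁) (h₂ : IsIsometricEmbedding G₂ U φ₂) :
    IsDistPreserving G₁ G₂ {p | φ₁ p.1 = φ₂ p.2} := by
  intro p (hp : φ₁ p.1 = φ₂ p.2) q (hq : φ₁ q.1 = φ₂ q.2)
  rw [SimpleGraph.dist, SimpleGraph.dist, h₁.2, h₂.2, hp, hq]

lemma card_add_card_le_card_add_ncard {V₁ V₂ W : Type*} [Finite W] {φ₁ : V₁ → W} {φ₂ : V₂ → W}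
    (h₁ : Function.Injective φ₁) (h₂ : Function.Injective φ₂) :
    Nat.card V₁ + Nat.card V₂ ≤ Nat.card W + {p : V₁ × V₂ | φ₁ p.1 = φ₂ p.2}.ncard := by
  have : Finite V₁ := Finite.of_injective φ₁ h₁
  have : Finite V₂ := Finite.of_injective φ₂ h₂
  have hinter : Set.range φ₁ ∩ Set.range φ₂ ⊆
      (fun p : V₁ × V₂ => φ₁ p.1) '' {p | φ₁ p.1 = φ₂ p.2} := by
    rintro _ ⟨⟨a, rfl⟩, ⟨y, hy⟩⟩
    exact ⟨(a, y), hy.symm, rfl⟩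
  have := Set.ncard_union_add_ncard_inter (Set.range φ₁) (Set.range φ₂)
  rw [Set.ncard_range_of_injective h₁, Set.ncard_range_of_injective h₂] at this
  have := Set.ncard_le_card (Set.range φ₁ ∪ Set.range φ₂)
  have := (Set.ncard_le_ncard hinter).trans (Set.ncard_image_le (Set.toFinite _))
  omega

/-- For any two finite trees `T₁, T₂` there is a minimum
isometric-universal graph for `{T₁, T₂}` that is itself a tree. -/
theorem stmt_1 {V₁ V₂ : Type} [Fintype V₁] [Fintype V₂]
    (T₁ : SimpleGraph V₁) (T₂ : SimpleGraph V₂)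
    (hT₁ : T₁.IsTree) (hT₂ : T₂.IsTree) :
    ∃ (W : Type) (_ : Fintype W) (U : SimpleGraph W),
      U.IsTree ∧ IsIsoUniversalPair T₁ T₂ U ∧
      ∀ (W' : Type) (_ : Finite W') (U' : SimpleGraph W'),
        IsIsoUniversalPair T₁ T₂ U' → Nat.card W ≤ Nat.card W' := by
  obtain ⟨R, hR, hRmax⟩ := exists_isDistPreserving_ncard_max T₁ T₂
  have : Nonempty V₁ := hT₁.connected.nonempty
  have hpartner : ∀ v ∈ Prod.snd '' R, ∃ a, (a, v) ∈ R := by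
    rintro _ ⟨p, hp, rfl⟩
    exact ⟨p.1, hp⟩
  choose! ρ hρ using hpartner
  have hinj := hR.injOn_of_partner hρ hT₂.connected
  have hU := glue_isTree T₁ T₂ hT₁ hT₂ hinj (hR.adj_of_partner hρ)
    (hR.connected_induce_snd_of_ncard_max hT₁ hT₂ hRmax)
  refine ⟨_, Fintype.ofFinite _, glue T₁ T₂ _ ρ, hU,
    ⟨⟨_, hT₁.isIsometricEmbedding hU.isAcyclic (glueHomLeft T₁ T₂) Sum.inl_injective⟩,
      ⟨_, hT₂.isIsometricEmbedding hU.isAcyclic (glueHomRight T₁ T₂ hinj)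
        (glueMap_injective hinj)⟩⟩, ?_⟩
  rintro W' _ U' ⟨⟨φ₁, hφ₁⟩, ⟨φ₂, hφ₂⟩⟩
  have hU' := card_add_card_le_card_add_ncard hφ₁.injective_s1 hφ₂.injective_s1
  have hR' := hRmax _ (isDistPreserving_of_isIsometricEmbedding hφ₁ hφ₂)
  have hW := card_sum_compl_add_ncard (V₁ := V₁) (E := Prod.snd '' R)
  have hE := hR.ncard_image_snd hT₁.connected
  omega
end

section
/- Let G and H be graphs with connected components G_1,…,G_s and H_1,…,H_r respectively. For each pair (i,j), let opt(G_i,H_j) denote the minimum number of vertices of an isometric-universal graph for {G_i,H_j}, and set w(i,j) = |V(G_i)| + |V(H_j)| − opt(G_i,H_j). Then for every matching M ⊆ {1,…,s}×{1,…,r} (a set of pairs in which all first coordinates are pairwise distinct and all second coordinates are pairwise distinct), there exists an isometric-universal graph for {G,H} with exactly |V(G)| + |V(H)| − Σ_{(i,j)∈M} w(i,j) vertices. -/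
/-!
Glue along the matching. Take the disjoint union of: an optimal isometric-universal graph for
`{G[c], H[d]}` for each `(c, d) ∈ M`, each unmatched component of `G`, and each unmatched
component of `H`. A graph is the disjoint union of its components, components lie at infinite
distance from each other, and embeddings of the components of `G` into pairwise distinct pieces
glue to an isometric embedding; likewise for `H`. Counting vertices, each matched pair `(c, d)`
saves exactly `|c| + |d| - opt(G[c], H[d]) = w(c, d)` vertices compared with `G ⊔ H`.

Distances are controlled by contractions: a map sending every edge to an edge or to a single
vertex does not increase `edist`, so an edge-preserving map with such a left inverse is isometric.
-/

open SimpleGraph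

/-- The minimum number of vertices of an isometric-universal graph for `{G, H}`. -/
noncomputable def optPair {V W : Type} (G : SimpleGraph V) (H : SimpleGraph W) : ℕ :=
  sInf {n : ℕ | ∃ U : SimpleGraph (Fin n), IsIsoUniversalPair G H U}

/-- The weight `w(i,j) = |V(G_i)| + |V(H_j)| - opt(G_i, H_j)` associated with a pair of
connected components `c` of `G` and `d` of `H`. -/
noncomputable def compWeight {V W : Type} (G : SimpleGraph V) (H : SimpleGraph W)
    (c : G.ConnectedComponent) (d : H.ConnectedComponent) : ℕ :=
  Nat.card c.supp + Nat.card d.supp - optPair (G.induce c.supp) (H.induce d.supp)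

/-- `M` is a matching between connected components: all first coordinates are pairwise
distinct and all second coordinates are pairwise distinct. -/
def IsCompMatching {V W : Type} {G : SimpleGraph V} {H : SimpleGraph W}
    (M : Finset (G.ConnectedComponent × H.ConnectedComponent)) : Prop :=
  (∀ p ∈ M, ∀ q ∈ M, p.1 = q.1 → p = q) ∧ (∀ p ∈ M, ∀ q ∈ M, p.2 = q.2 → p = q)

namespace SimpleGraph

variable {V W : Type} {G : SimpleGraph V} {U : SimpleGraph W}

theorem edist_le_of_adj_or_eq (r : W → V)
    (hr : ∀ x y, U.Adj x y → G.Adj (r x) (r y) ∨ r x = r y) (x y : W) :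
    G.edist (r x) (r y) ≤ U.edist x y := by
  suffices h : ∀ {x y} (p : U.Walk x y), G.edist (r x) (r y) ≤ p.length by
    by_cases hxy : U.Reachable x y
    · obtain ⟨p, hp⟩ := hxy.exists_walk_length_eq_edist
      exact hp ▸ h p
    · simp [edist_eq_top_of_not_reachable hxy]
  intro x y p
  induction p with
  | nil => simp
  | @cons x y z hxy p ih =>
    calc G.edist (r x) (r z) ≤ G.edist (r x) (r y) + G.edist (r y) (r z) := G.edist_triangle
      _ ≤ 1 + p.length := add_le_add (edist_le_one_iff_adj_or_eq.2 (hr x y hxy)) ih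
      _ = (Walk.cons hxy p).length := by simp [add_comm]

theorem edist_apply_eq_of_leftInverse {φ : V → W} (hφ : ∀ u v, G.Adj u v → U.Adj (φ u) (φ v))
    {r : W → V} (hrφ : Function.LeftInverse r φ)
    (hr : ∀ x y, U.Adj x y → G.Adj (r x) (r y) ∨ r x = r y) (u v : V) :
    U.edist (φ u) (φ v) = G.edist u v := by
  refine le_antisymm (edist_le_of_adj_or_eq φ (fun x y h => .inl (hφ x y h)) u v) ?_
  simpa only [hrφ u, hrφ v] using edist_le_of_adj_or_eq r hr (φ u) (φ v)

theorem edist_eq_top_of_apply_ne {ι : Type} (f : W → ι) (hf : ∀ x y, U.Adj x y → f x = f y)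
    {x y : W} (hxy : f x ≠ f y) : U.edist x y = ⊤ := by
  have := edist_le_of_adj_or_eq (G := ⊥) f (fun x y h => .inr (hf x y h)) x y
  rwa [edist_bot_of_ne hxy, top_le_iff] at this

section Sigma

variable {ι : Type} {α : ι → Type}

protected def sigma (A : ∀ i, SimpleGraph (α i)) : SimpleGraph (Σ i, α i) where
  Adj x y := ∃ i a b, (A i).Adj a b ∧ x = ⟨i, a⟩ ∧ y = ⟨i, b⟩
  symm := ⟨fun _ _ ⟨i, a, b, h, hx, hy⟩ => ⟨i, b, a, h.symm, hy, hx⟩⟩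
  loopless := ⟨by rintro _ ⟨i, a, b, h, rfl, ⟨⟩⟩; exact h.ne rfl⟩

variable {A : ∀ i, SimpleGraph (α i)}

theorem sigma_adj {x y : Σ i, α i} :
    (SimpleGraph.sigma A).Adj x y ↔ ∃ i a b, (A i).Adj a b ∧ x = ⟨i, a⟩ ∧ y = ⟨i, b⟩ :=
  Iff.rfl

@[simp]
theorem sigma_adj_mk {i : ι} {a b : α i} :
    (SimpleGraph.sigma A).Adj ⟨i, a⟩ ⟨i, b⟩ ↔ (A i).Adj a b := by
  refine ⟨fun h => ?_, fun h => ⟨i, a, b, h, rfl, rfl⟩⟩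
  obtain ⟨j, a', b', hab, ⟨⟩, ⟨⟩⟩ := sigma_adj.1 h
  exact hab

theorem edist_sigma_of_fst_ne {x y : Σ i, α i} (hxy : x.1 ≠ y.1) :
    (SimpleGraph.sigma A).edist x y = ⊤ := by
  refine edist_eq_top_of_apply_ne Sigma.fst (fun _ _ h => ?_) hxy
  obtain ⟨i, a, b, -, rfl, rfl⟩ := sigma_adj.1 h
  rfl

variable (G)

def Iso.sigmaInduceSupp :
    SimpleGraph.sigma (fun c : G.ConnectedComponent => G.induce c.supp) ≃g G where
  toFun x := x.2
  invFun v := ⟨G.connectedComponentMk v, v, rfl⟩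
  left_inv := by rintro ⟨_, v, rfl⟩; rfl
  right_inv _ := rfl
  map_rel_iff' := by
    rintro ⟨c, u, hu⟩ ⟨d, v, hv⟩
    change G.Adj u v ↔ _
    refine ⟨fun h => ?_, fun h => ?_⟩
    · obtain rfl : c = d := hu.symm.trans (hv ▸ ConnectedComponent.sound h.reachable)
      exact sigma_adj_mk.2 h
    · obtain ⟨e, a, b, hab, ⟨⟩, ⟨⟩⟩ := sigma_adj.1 h
      exact hab

end Sigma

end SimpleGraph

namespace IsIsometricEmbedding

variable {V W X : Type} {G : SimpleGraph V} {U : SimpleGraph W} {U' : SimpleGraph X}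

protected theorem id (G : SimpleGraph V) : IsIsometricEmbedding G G id :=
  ⟨fun _ _ h => h, fun _ _ => rfl⟩

protected theorem comp {φ : V → W} {ψ : W → X} (hψ : IsIsometricEmbedding U U' ψ)
    (hφ : IsIsometricEmbedding G U φ) : IsIsometricEmbedding G U' (ψ ∘ φ) :=
  ⟨fun u v h => hψ.1 _ _ (hφ.1 u v h), fun u v => (hφ.2 u v).trans (hψ.2 _ _)⟩

/-- The retraction `r u` may depend on the base point `u`, e.g. to collapse the parts of `U`
outside the image of `φ` onto `u`. -/
theorem of_leftInverse {φ : V → W} (hφ : ∀ u v, G.Adj u v → U.Adj (φ u) (φ v))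
    (r : V → W → V) (hrφ : ∀ u, Function.LeftInverse (r u) φ)
    (hr : ∀ u x y, U.Adj x y → G.Adj (r u x) (r u y) ∨ r u x = r u y) :
    IsIsometricEmbedding G U φ :=
  ⟨hφ, fun u v => (edist_apply_eq_of_leftInverse hφ (hrφ u) (hr u) u v).symm⟩

section Sigma

variable {ι κ : Type} {α : ι → Type} {γ : κ → Type}

theorem sigmaMk (A : ∀ i, SimpleGraph (α i)) (i : ι) :
    IsIsometricEmbedding (A i) (SimpleGraph.sigma A) (Sigma.mk i) := by
  classical
  refine .of_leftInverse (fun _ _ => sigma_adj_mk.2)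
    (fun a x => if h : x.1 = i then h ▸ x.2 else a) (fun _ _ => by simp) ?_
  intro a _ _ h
  obtain ⟨j, b, c, hbc, rfl, rfl⟩ := sigma_adj.1 h
  by_cases hj : j = i
  · subst hj
    simpa using Or.inl hbc
  · simp [hj]

theorem sigmaMap {A : ∀ i, SimpleGraph (α i)} {U : ∀ k, SimpleGraph (γ k)} {τ : ι → κ}
    (hτ : Function.Injective τ) {φ : ∀ i, α i → γ (τ i)}
    (hφ : ∀ i, IsIsometricEmbedding (A i) (U (τ i)) (φ i)) :
    IsIsometricEmbedding (SimpleGraph.sigma A) (SimpleGraph.sigma U) (Sigma.map τ φ) := by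
  refine ⟨fun _ _ h => ?_, ?_⟩
  · obtain ⟨i, a, b, hab, rfl, rfl⟩ := sigma_adj.1 h
    exact sigma_adj_mk.2 ((hφ i).1 a b hab)
  rintro ⟨i, a⟩ ⟨j, b⟩
  by_cases hij : i = j
  · subst hij
    rw [← (sigmaMk A i).2, (hφ i).2]
    exact (sigmaMk U (τ i)).2 _ _
  · rw [edist_sigma_of_fst_ne hij, edist_sigma_of_fst_ne (hτ.ne hij)]

end Sigma

end IsIsometricEmbedding

theorem SimpleGraph.Iso.isIsometricEmbedding {V W : Type} {G : SimpleGraph V}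
    {U : SimpleGraph W} (e : G ≃g U) : IsIsometricEmbedding G U e :=
  .of_leftInverse (fun _ _ => e.map_rel_iff.2) (fun _ => e.symm) (fun _ => e.symm_apply_apply)
    fun _ _ _ h => .inl (e.symm.map_rel_iff.2 h)

namespace IsIsoUniversalPair

variable {V₁ V₂ W X : Type} {G₁ : SimpleGraph V₁} {G₂ : SimpleGraph V₂}

theorem of_iso {U : SimpleGraph W} {U' : SimpleGraph X} (h : IsIsoUniversalPair G₁ G₂ U)
    (e : U ≃g U') : IsIsoUniversalPair G₁ G₂ U' :=
  ⟨h.1.imp' (e ∘ ·) fun _ hφ => e.isIsometricEmbedding.comp hφ,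
    h.2.imp' (e ∘ ·) fun _ hφ => e.isIsometricEmbedding.comp hφ⟩

theorem exists_fin [Finite W] {U : SimpleGraph W} (h : IsIsoUniversalPair G₁ G₂ U) :
    ∃ U' : SimpleGraph (Fin (Nat.card W)), IsIsoUniversalPair G₁ G₂ U' :=
  ⟨_, h.of_iso (Iso.map (Finite.equivFin W) U)⟩

theorem sum (G₁ : SimpleGraph V₁) (G₂ : SimpleGraph V₂) :
    IsIsoUniversalPair G₁ G₂ (G₁ ⊕g G₂) := by
  refine ⟨⟨Sum.inl, .of_leftInverse (fun _ _ => sum_adj_inl.2) (fun u => Sum.elim id fun _ => u)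
    (fun _ _ => rfl) ?_⟩, ⟨Sum.inr, .of_leftInverse (fun _ _ => sum_adj_inr.2)
    (fun u => Sum.elim (fun _ => u) id) (fun _ _ => rfl) ?_⟩⟩ <;>
  rintro u (x | x) (y | y) h <;> simp_all

end IsIsoUniversalPair

theorem exists_isIsometricEmbedding_sigma_of_injective {V κ : Type} {γ : κ → Type}
    {G : SimpleGraph V} {U : ∀ k, SimpleGraph (γ k)} {τ : G.ConnectedComponent → κ}
    (hτ : Function.Injective τ)
    (h : ∀ c, ∃ φ : c.supp → γ (τ c), IsIsometricEmbedding (G.induce c.supp) (U (τ c)) φ) :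
    ∃ φ : V → Σ k, γ k, IsIsometricEmbedding G (SimpleGraph.sigma U) φ := by
  choose φ hφ using h
  exact ⟨_, (IsIsometricEmbedding.sigmaMap hτ hφ).comp
    (Iso.sigmaInduceSupp G).symm.isIsometricEmbedding⟩

section OptPair

variable {V₁ V₂ : Type} [Finite V₁] [Finite V₂] (G₁ : SimpleGraph V₁) (G₂ : SimpleGraph V₂)

theorem exists_isIsoUniversalPair_fin_card_add_card :
    ∃ U : SimpleGraph (Fin (Nat.card V₁ + Nat.card V₂)), IsIsoUniversalPair G₁ G₂ U :=
  Nat.card_sum (α := V₁) (β := V₂) ▸ (IsIsoUniversalPair.sum G₁ G₂).exists_fin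

theorem optPair_le_card_add_card : optPair G₁ G₂ ≤ Nat.card V₁ + Nat.card V₂ :=
  Nat.sInf_le (exists_isIsoUniversalPair_fin_card_add_card G₁ G₂)

theorem exists_isIsoUniversalPair_fin_optPair :
    ∃ U : SimpleGraph (Fin (optPair G₁ G₂)), IsIsoUniversalPair G₁ G₂ U :=
  show optPair G₁ G₂ ∈ {n | ∃ U : SimpleGraph (Fin n), IsIsoUniversalPair G₁ G₂ U} from
    Nat.sInf_mem ⟨_, exists_isIsoUniversalPair_fin_card_add_card G₁ G₂⟩

noncomputable def optGraph : SimpleGraph (Fin (optPair G₁ G₂)) :=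
  (exists_isIsoUniversalPair_fin_optPair G₁ G₂).choose

theorem isIsoUniversalPair_optGraph : IsIsoUniversalPair G₁ G₂ (optGraph G₁ G₂) :=
  (exists_isIsoUniversalPair_fin_optPair G₁ G₂).choose_spec

end OptPair

section AssignIndex

open Finset

variable {P C R : Type} [DecidableEq C] (M : Finset P) (f : P → C)
  (ι : {c // c ∉ M.image f} → R)

/-- Sends `c` to a pair of `M` over it if there is one, and to its own slot `ι c` otherwise. -/
noncomputable def assignIndex (c : C) : {p // p ∈ M} ⊕ R :=
  if h : c ∈ M.image f then .inl ⟨(mem_image.1 h).choose, (mem_image.1 h).choose_spec.1⟩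
  else .inr (ι ⟨c, h⟩)

variable {M f ι}

theorem assignIndex_injective (hι : Function.Injective ι) :
    Function.Injective (assignIndex M f ι) := by
  intro c c' h
  unfold assignIndex at h
  split_ifs at h with hc hc'
  · rw [← (mem_image.1 hc).choose_spec.2, ← (mem_image.1 hc').choose_spec.2]
    exact congrArg (fun p : {p // p ∈ M} => f p) (Sum.inl_injective h)
  · exact congrArg Subtype.val (hι (Sum.inr_injective h))

theorem exists_isIsometricEmbedding_assignIndex {β : C → Type} {X : ∀ c, SimpleGraph (β c)}
    {γ : {p // p ∈ M} ⊕ R → Type} {U : ∀ k, SimpleGraph (γ k)}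
    (hM : ∀ p : {p // p ∈ M}, ∃ φ, IsIsometricEmbedding (X (f p)) (U (.inl p)) φ)
    (hR : ∀ c, ∃ φ, IsIsometricEmbedding (X c.1) (U (.inr (ι c))) φ) (c : C) :
    ∃ φ, IsIsometricEmbedding (X c) (U (assignIndex M f ι c)) φ := by
  have hM' (p : {p // p ∈ M}) (c : C) (hpc : f p = c) :
      ∃ φ, IsIsometricEmbedding (X c) (U (.inl p)) φ :=
    hpc ▸ hM p
  generalize hk : assignIndex M f ι c = k
  unfold assignIndex at hk
  split_ifs at hk with hc <;> subst hk
  · exact hM' _ c (mem_image.1 hc).choose_spec.2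
  · exact hR ⟨c, hc⟩

end AssignIndex

section Glue

open Finset

variable {V W : Type} [Finite V] [Finite W] {G : SimpleGraph V} {H : SimpleGraph W}

theorem card_eq_sum_add_card_sigma [DecidableEq G.ConnectedComponent]
    (S : Finset G.ConnectedComponent) :
    Nat.card V = ∑ c ∈ S, Nat.card c.supp + Nat.card (Σ c : {c // c ∉ S}, c.1.supp) := by
  have := Fintype.ofFinite G.ConnectedComponent
  rw [← Nat.card_congr (Iso.sigmaInduceSupp G).toEquiv, Nat.card_sigma, Nat.card_sigma,
    ← sum_add_sum_compl S, sum_subtype Sᶜ (fun _ => mem_compl)]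

variable [DecidableEq G.ConnectedComponent] [DecidableEq H.ConnectedComponent]
  (M : Finset (G.ConnectedComponent × H.ConnectedComponent))

abbrev PieceIndex : Type :=
  {p // p ∈ M} ⊕ ({c // c ∉ M.image Prod.fst} ⊕ {d // d ∉ M.image Prod.snd})

def pieceVerts : PieceIndex M → Type
  | .inl p => Fin (optPair (G.induce p.1.1.supp) (H.induce p.1.2.supp))
  | .inr (.inl c) => c.1.supp
  | .inr (.inr d) => d.1.supp

instance (k : PieceIndex M) : Finite (pieceVerts M k) := by
  rcases k with _ | _ | _ <;> dsimp only [pieceVerts] <;> infer_instance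

noncomputable def pieceGraph : ∀ k, SimpleGraph (pieceVerts M k)
  | .inl p => optGraph (G.induce p.1.1.supp) (H.induce p.1.2.supp)
  | .inr (.inl c) => G.induce c.1.supp
  | .inr (.inr d) => H.induce d.1.supp

theorem isIsoUniversalPair_sigma_pieceGraph :
    IsIsoUniversalPair G H (SimpleGraph.sigma (pieceGraph M)) :=
  ⟨exists_isIsometricEmbedding_sigma_of_injective (assignIndex_injective Sum.inl_injective)
      (exists_isIsometricEmbedding_assignIndex (fun _ => (isIsoUniversalPair_optGraph _ _).1)
        fun _ => ⟨id, .id _⟩),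
    exists_isIsometricEmbedding_sigma_of_injective (assignIndex_injective Sum.inr_injective)
      (exists_isIsometricEmbedding_assignIndex (fun _ => (isIsoUniversalPair_optGraph _ _).2)
        fun _ => ⟨id, .id _⟩)⟩

theorem card_sigma_pieceVerts :
    Nat.card (Σ k, pieceVerts M k) =
      ∑ p ∈ M, optPair (G.induce p.1.supp) (H.induce p.2.supp) +
        Nat.card (Σ c : {c // c ∉ M.image Prod.fst}, c.1.supp) +
        Nat.card (Σ d : {d // d ∉ M.image Prod.snd}, d.1.supp) := by
  rw [Nat.card_congr (Equiv.sumSigmaDistrib _), Nat.card_sum,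
    Nat.card_congr (Equiv.sumSigmaDistrib _), Nat.card_sum, Nat.card_sigma, ← add_assoc,
    ← sum_coe_sort M]
  simp [pieceVerts]

theorem card_sigma_pieceVerts_add_sum_compWeight (hM : IsCompMatching M) :
    Nat.card (Σ k, pieceVerts M k) + ∑ p ∈ M, compWeight G H p.1 p.2 =
      Nat.card V + Nat.card W := by
  have hV := card_eq_sum_add_card_sigma (G := G) (M.image Prod.fst)
  have hW := card_eq_sum_add_card_sigma (G := H) (M.image Prod.snd)
  rw [sum_image hM.1] at hV
  rw [sum_image hM.2] at hW
  -- `compWeight` is a truncated difference; `optPair_le_card_add_card` makes it exact.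
  have hweight : ∑ p ∈ M, (optPair (G.induce p.1.supp) (H.induce p.2.supp) +
      compWeight G H p.1 p.2) = ∑ p ∈ M, (Nat.card p.1.supp + Nat.card p.2.supp) :=
    sum_congr rfl fun _ _ => Nat.add_sub_cancel' (optPair_le_card_add_card _ _)
  rw [sum_add_distrib, sum_add_distrib] at hweight
  rw [card_sigma_pieceVerts]
  omega

end Glue

/-- For every matching `M` between the components of `G` and of `H`
there is an isometric-universal graph for `{G, H}` with exactly
`|V(G)| + |V(H)| - ∑_{(i,j) ∈ M} w(i,j)` vertices. -/
theorem stmt_4 {V W : Type} [Fintype V] [Fintype W]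
    (G : SimpleGraph V) (H : SimpleGraph W)
    (M : Finset (G.ConnectedComponent × H.ConnectedComponent))
    (hM : IsCompMatching M) :
    ∃ U : SimpleGraph
        (Fin (Nat.card V + Nat.card W - ∑ p ∈ M, compWeight G H p.1 p.2)),
      IsIsoUniversalPair G H U := by
  classical
  rw [← card_sigma_pieceVerts_add_sum_compWeight M hM, Nat.add_sub_cancel]
  exact (isIsoUniversalPair_sigma_pieceGraph M).exists_fin
end
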